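/- The semigroup A presented by ⟨a, b | a*a*b = a⟩ is not an LWF semigroup. -/

import Mathlib

namespace Stmt15

/-- A semigroup `S` is LWF (locally wrapped by the class of finite semigroups) if for every
finite subset `H` of `S` there exist a finite semigroup `D` and a function `d : D → S` such
that `H ⊆ d(D)` and `d (x' * y') = d x' * d y'` whenever `d x', d y' ∈ H`. -/
def IsLWF (S : Type*) [Semigroup S] : Prop :=
  ∀ H : Finset S, ∃ (D : Type) (_ : Semigroup D) (_ : Fintype D) (d : D → S),
    (↑H ⊆ Set.range d) ∧
      ∀ x' y' : D, d x' ∈ H → d y' ∈ H → d (x' * y') = d x' * d y'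

/-- The generator `a` of the free semigroup on two generators. -/
def a : FreeSemigroup (Fin 2) := FreeSemigroup.of 0

/-- The generator `b` of the free semigroup on two generators. -/
def b : FreeSemigroup (Fin 2) := FreeSemigroup.of 1

/-- The defining relation `a * a * b = a`. -/
def rel : FreeSemigroup (Fin 2) → FreeSemigroup (Fin 2) → Prop :=
  fun x y => x = a * a * b ∧ y = a

/-- The semigroup `A = ⟨a, b ∣ aab = a⟩`. -/
def A : Type := (conGen rel).Quotient

instance : Semigroup A := Con.semigroup _

/-!
Suppose a finite semigroup `D` wraps `H = {a, b, ab}` via `d`, with `d x = a` and `d y = b`.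
The fibres `P = d⁻¹ a` and `Q = d⁻¹ (ab)` satisfy `P y ⊆ Q`, `x Q ⊆ P` and `P Q ⊆ P`, because
`a · ab = a` in `A`. Finiteness yields `g, h` such that `e = g x` and `f = y h` are idempotent and
`z ↦ g z h` preserves `P`. For `w = e z f` with `z ∈ P`, the element `u = (w y) w` satisfies
`u = e u f = g (x u y) h` with `x u y = (x (w y)) (w y) ∈ P`, so `d u = a`; but also
`d u = ab · a`, and `aba ≠ a` in `A`, as a height invariant of words shows.
-/

lemma _root_.Subsemigroup.exists_isIdempotentElem {S : Type*} [Semigroup S] [Finite S]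
    (T : Subsemigroup S) (hT : (T : Set S).Nonempty) : ∃ e ∈ T, IsIdempotentElem e := by
  let _ : TopologicalSpace S := ⊥
  have : DiscreteTopology S := ⟨rfl⟩
  exact exists_idempotent_in_compact_subsemigroup (fun _ => continuous_of_discreteTopology)
    (T : Set S) hT (Set.toFinite _).isCompact fun _ hx _ hy => T.mul_mem hx hy

lemma _root_.Subsemigroup.exists_isIdempotentElem_mul {S : Type*} [Semigroup S] [Finite S]
    (T : Subsemigroup S) {c : S} (hc : c ∈ T) : ∃ g ∈ T, IsIdempotentElem (g * c) := by
  let Tc : Subsemigroup S :=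
    { carrier := {s | ∃ g ∈ T, s = g * c}
      mul_mem' := by
        rintro _ _ ⟨g, hg, rfl⟩ ⟨g', hg', rfl⟩
        exact ⟨g * c * g', T.mul_mem (T.mul_mem hg hc) hg', by simp only [mul_assoc]⟩ }
  obtain ⟨_, ⟨g, hg, rfl⟩, he⟩ := Tc.exists_isIdempotentElem ⟨c * c, c, hc, rfl⟩
  exact ⟨g, hg, he⟩

def _root_.Set.sandwichStabilizer {D : Type*} [Semigroup D] (P : Set D) :
    Subsemigroup (D × Dᵐᵒᵖ) where
  carrier := {c | ∀ z ∈ P, c.1 * z * c.2.unop ∈ P}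
  mul_mem' {c c'} hc hc' z hz := by
    simpa only [Prod.fst_mul, Prod.snd_mul, MulOpposite.unop_mul, mul_assoc] using
      hc _ (hc' z hz)

theorem exists_mul_mem_of_finite {D : Type*} [Semigroup D] [Finite D] {x y : D} {P Q : Set D}
    (hP : P.Nonempty) (hPQ : ∀ p ∈ P, p * y ∈ Q) (hQP : ∀ q ∈ Q, x * q ∈ P)
    (hPQP : ∀ p ∈ P, ∀ q ∈ Q, p * q ∈ P) : ∃ q ∈ Q, ∃ p ∈ P, q * p ∈ P := by
  have hxPy : ∀ p ∈ P, x * p * y ∈ P := fun p hp => by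
    simpa only [mul_assoc] using hQP _ (hPQ p hp)
  have : Finite Dᵐᵒᵖ := .of_equiv D MulOpposite.opEquiv
  obtain ⟨c, hc, hidem⟩ :=
    P.sandwichStabilizer.exists_isIdempotentElem_mul (c := (x, .op y)) hxPy
  set e := c.1 * x
  set f := y * c.2.unop
  have he : e * e = e := congrArg Prod.fst hidem
  have hf : f * f = f := congrArg (MulOpposite.unop ∘ Prod.snd) hidem
  have hsandwich : ∀ t, x * t * y ∈ P → e * t * f ∈ P := fun t ht => by
    simpa only [e, f, mul_assoc] using hc _ ht
  obtain ⟨z, hz⟩ := hP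
  set w := e * z * f
  have hw : w ∈ P := hsandwich z (hxPy z hz)
  have hwy : w * y ∈ Q := hPQ w hw
  refine ⟨w * y, hwy, w, hw, ?_⟩
  have hfix : e * (w * y * w) * f = w * y * w := by
    simp only [w, ← mul_assoc, he]
    simp only [mul_assoc, hf]
  rw [← hfix]
  exact hsandwich _ (by simpa only [mul_assoc] using hPQP _ (hQP _ hwy) _ hwy)

/-- A word in `a, b`, read as a walk stepping up at `a` and down at `b`, is recorded by its final
height and the lowest height it reaches after its first step. -/
@[ext]
structure HeightProfile where
  final : ℤ
  low : ℤ

namespace HeightProfile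

instance : Mul HeightProfile := ⟨fun s t => ⟨s.final + t.final, min s.low (s.final + t.low)⟩⟩

@[simp] lemma final_mul (s t : HeightProfile) : (s * t).final = s.final + t.final := rfl

@[simp] lemma low_mul (s t : HeightProfile) : (s * t).low = min s.low (s.final + t.low) := rfl

instance : Semigroup HeightProfile where
  mul_assoc s t u := by ext <;> simp only [final_mul, low_mul] <;> omega

end HeightProfile

def heightProfile : FreeSemigroup (Fin 2) →ₙ* HeightProfile :=
  FreeSemigroup.lift ![⟨1, 1⟩, ⟨-1, -1⟩]

lemma conGen_rel_le_ker_heightProfile : conGen rel ≤ Con.ker heightProfile := by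
  refine Con.conGen_le.mpr ?_
  rintro _ _ ⟨rfl, rfl⟩
  rfl

def A.mk (w : FreeSemigroup (Fin 2)) : A := (w : (conGen rel).Quotient)

lemma A.mk_mul (v w : FreeSemigroup (Fin 2)) : A.mk (v * w) = A.mk v * A.mk w := rfl

lemma A.mk_a_mul_mk_ab : A.mk a * A.mk (a * b) = A.mk a := by
  rw [← A.mk_mul, ← mul_assoc]
  exact Con.eq _ |>.mpr <| ConGen.Rel.of _ _ ⟨rfl, rfl⟩

lemma A.mk_ab_mul_mk_a_ne : A.mk (a * b) * A.mk a ≠ A.mk a := fun h => by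
  have := conGen_rel_le_ker_heightProfile (Con.eq _ |>.mp h)
  simp [Con.ker_rel, heightProfile, a, b, HeightProfile.ext_iff] at this

/-- The semigroup `A = ⟨a, b ∣ aab = a⟩` is not an LWF semigroup. -/
theorem A_not_isLWF : ¬ IsLWF A := by
  classical
  intro hLWF
  obtain ⟨D, _, _, d, hcover, hmul⟩ := hLWF {A.mk a, A.mk b, A.mk (a * b)}
  obtain ⟨x, hx⟩ := hcover (by simp : A.mk a ∈ _)
  obtain ⟨y, hy⟩ := hcover (by simp : A.mk b ∈ _)
  obtain ⟨q, hq : d q = _, p, hp : d p = _, hqp : d (q * p) = _⟩ :=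
    exists_mul_mem_of_finite (P := d ⁻¹' {A.mk a}) (Q := d ⁻¹' {A.mk (a * b)}) ⟨x, hx⟩
    (fun p (hp : d p = _) => show d (p * y) = _ by
      rw [hmul p y (by simp [hp]) (by simp [hy]), hp, hy, A.mk_mul])
    (fun q (hq : d q = _) => show d (x * q) = _ by
      rw [hmul x q (by simp [hx]) (by simp [hq]), hx, hq, A.mk_a_mul_mk_ab])
    (fun p (hp : d p = _) q (hq : d q = _) => show d (p * q) = _ by
      rw [hmul p q (by simp [hp]) (by simp [hq]), hp, hq, A.mk_a_mul_mk_ab])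
  have hmul_qp := hmul q p (by simp [hq]) (by simp [hp])
  rw [hqp, hq, hp] at hmul_qp
  exact A.mk_ab_mul_mk_a_ne hmul_qp.symm

end Stmt15
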